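/- In the canonical model M^c(X_0), for any group G ⊆ I, state s ∈ S^c, formula φ, and strategy σ_G all of whose complete executions starting from [s]_G are finite with Kh_G φ ∈ ed(t) for every leaf-node [t]_G ∈ CELeaf(σ_G, s): if there exists an inner-node [s']_G ∈ CEInner(σ_G, s) with ¬Kh_G φ ∈ ed(s'), then there exists an infinite execution of σ_G starting from [s]_G (hence, by contradiction, Kh_G φ ∈ ed(s') for every inner-node [s']_G ∈ CEInner(σ_G, s)). -/

import Mathlib

namespace DKH

/-- Groups of agents: subsets of the finite agent set `I = {i_0, …, i_{n-1}}`. -/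
abbrev Grp (n : ℕ) := Finset (Fin n)

/-- The language DKH: φ ::= ⊤ | p | ¬φ | (φ∧φ) | K_G φ | Kh_G φ. -/
inductive Formula (P : Type) (n : ℕ) : Type
  | top  : Formula P n
  | atom : P → Formula P n
  | neg  : Formula P n → Formula P n
  | and  : Formula P n → Formula P n → Formula P n
  | K    : Grp n → Formula P n → Formula P n
  | Kh   : Grp n → Formula P n → Formula P n

instance {P n} : Inhabited (Formula P n) := ⟨.top⟩

namespace Formula
/-- Defined implication φ → ψ := ¬(φ ∧ ¬ψ). -/
def imp {P n} (φ ψ : Formula P n) : Formula P n := .neg (φ.and ψ.neg)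
/-- Defined falsum ⊥ := ¬⊤. -/
def bot {P : Type} {n : ℕ} : Formula P n := .neg .top
end Formula

/-- A model ⟨S, {∼_i}, {A_G}, {→_a}, V⟩. -/
structure KhModel (P : Type) (n : ℕ) where
  State : Type
  Act : Type
  sim : Fin n → State → State → Prop
  sim_equiv : ∀ i, Equivalence (sim i)
  A : Grp n → Set Act
  A_empty : A ∅ = ∅
  A_disj : ∀ G H : Grp n, G ⊂ H → A G ∩ A H = ∅
  tr : Act → State → State → Prop
  V : P → Set State

/-- Distributed indistinguishability: s ∼_G t iff s ∼_i t for every i ∈ G. -/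
def gsim {P n} (M : KhModel P n) (G : Grp n) (s t : M.State) : Prop :=
  ∀ i ∈ G, M.sim i s t

/-- Distributed actions: atomic group actions, or joint tuples ⟨d_0,…,d_k⟩. -/
inductive DAct (Act : Type) : Type
  | atom : Act → DAct Act
  | joint : List (DAct Act) → DAct Act

mutual
/-- Distributed transition relation: →_{⟨d_0,…,d_k⟩} = ⋂_j →_{d_j}. -/
def dtr {Act State : Type} (tr : Act → State → State → Prop) :
    DAct Act → State → State → Prop
  | .atom a, s, t => tr a s t
  | .joint ds, s, t => dtrList tr ds s t

def dtrList {Act State : Type} (tr : Act → State → State → Prop) :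
    List (DAct Act) → State → State → Prop
  | [], _, _ => True
  | d :: ds, s, t => dtr tr d s t ∧ dtrList tr ds s t
end

/-- `Gs` is a partial partition of `G`: a family of nonempty, pairwise disjoint
blocks, all included in `G` (i.e. a partition of a subset of `G`). -/
def PartialPartition {n : ℕ} (G : Grp n) (Gs : List (Grp n)) : Prop :=
  (∀ B ∈ Gs, B ≠ ∅) ∧ Gs.Pairwise (fun B C => Disjoint B C) ∧ (∀ B ∈ Gs, B ⊆ G)

/-- The fixed ordering on mutually disjoint nonempty groups: G ≺ H iff the
minimal index of an agent in G is below that of H. -/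
def grpLt {n : ℕ} (B C : Grp n) : Prop := B.min < C.min

/-- Membership in the set A*_G of distributed actions of group G:
the closure of A^+_G = ⋃_{G'⊆G} A_{G'} under forming joint actions
⟨d_0,…,d_k⟩ ∈ A*_{G_0} × ⋯ × A*_{G_k} for non-trivial partial partitions
{G_0,…,G_k} of G listed in the fixed order ≺. -/
inductive star {n : ℕ} {Act : Type} (A : Grp n → Set Act) : Grp n → DAct Act → Prop
  | base {G G' : Grp n} {a : Act} :
      G' ⊆ G → a ∈ A G' → star A G (.atom a)
  | joint {G : Grp n} {Gs : List (Grp n)} {ds : List (DAct Act)} :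
      2 ≤ Gs.length → PartialPartition G Gs → Gs.Chain' grpLt →
      List.Forall₂ (star A) Gs ds → star A G (.joint ds)

/-- Membership in A^+_G = ⋃_{G'⊆G} A_{G'} (as a set of distributed actions). -/
def inAplus {n : ℕ} {Act : Type} (A : Grp n → Set Act) (G : Grp n) (d : DAct Act) : Prop :=
  ∃ G' : Grp n, G' ⊆ G ∧ ∃ a ∈ A G', d = .atom a

/-- d is executable on X if every s ∈ X has a d-successor. -/
def ExecutableOn {P n} (M : KhModel P n) (d : DAct M.Act) (X : Set M.State) : Prop :=
  ∀ s ∈ X, ∃ t, dtr M.tr d s t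

/-- A strategy of group G: a partial function from ∼_G-equivalence classes to
A*_G such that the prescribed action is executable on the class. -/
structure Strategy {P n} (M : KhModel P n) (G : Grp n) where
  act : M.State → Option (DAct M.Act)
  uniform : ∀ s t, gsim M G s t → act s = act t
  mem_star : ∀ s d, act s = some d → star M.A G d
  exec : ∀ s d, act s = some d → ∀ t, gsim M G s t → ∃ u, dtr M.tr d t u

/-- One step of an execution: [s]_G →_{σ([s]_G)} [t]_G. -/
def stepRel {P n} {M : KhModel P n} {G : Grp n} (σ : Strategy M G) (s t : M.State) : Prop :=
  ∃ d, σ.act s = some d ∧ ∃ u v, gsim M G s u ∧ gsim M G t v ∧ dtr M.tr d u v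

/-- Leaf-nodes of the finite complete executions of σ starting from [s]_G,
as a ∼_G-closed set of states. -/
def CELeaf {P n} {M : KhModel P n} {G : Grp n} (σ : Strategy M G) (s : M.State) :
    Set M.State :=
  {t | ∃ (m : ℕ) (f : ℕ → M.State), gsim M G s (f 0) ∧
    (∀ j < m, stepRel σ (f j) (f (j+1))) ∧ σ.act (f m) = none ∧ gsim M G (f m) t}

/-- There is an infinite (hence complete) execution of σ starting from [s]_G. -/
def InfiniteFrom {P n} {M : KhModel P n} {G : Grp n} (σ : Strategy M G) (s : M.State) : Prop :=
  ∃ f : ℕ → M.State, gsim M G s (f 0) ∧ ∀ j, stepRel σ (f j) (f (j+1))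

/-- Inner-nodes of the complete executions of σ starting from [s]_G,
as a ∼_G-closed set of states. -/
def CEInner {P n} {M : KhModel P n} {G : Grp n} (σ : Strategy M G) (s : M.State) :
    Set M.State :=
  {t | (∃ (m : ℕ) (f : ℕ → M.State), gsim M G s (f 0) ∧
          (∀ j < m, stepRel σ (f j) (f (j+1))) ∧ σ.act (f m) = none ∧
          ∃ j < m, gsim M G (f j) t) ∨
       (∃ f : ℕ → M.State, gsim M G s (f 0) ∧
          (∀ j, stepRel σ (f j) (f (j+1))) ∧ ∃ j, gsim M G (f j) t)}

/-- Truth at a pointed model. -/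
def Sat {P n} (M : KhModel P n) : M.State → Formula P n → Prop
  | _, .top => True
  | s, .atom p => s ∈ M.V p
  | s, .neg φ => ¬ Sat M s φ
  | s, .and φ ψ => Sat M s φ ∧ Sat M s ψ
  | s, .K G φ => ∀ t, gsim M G s t → Sat M t φ
  | s, .Kh G φ => ∃ σ : Strategy M G,
      (∀ t ∈ CELeaf σ s, Sat M t φ) ∧ ¬ InfiniteFrom σ s

/-- Boolean evaluation treating ⊤, ¬, ∧ as connectives and everything else
as atoms; used to define propositional tautologies. -/
def beval {P n} (v : Formula P n → Bool) : Formula P n → Bool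
  | .top => true
  | .atom p => v (.atom p)
  | .neg φ => !(beval v φ)
  | .and φ ψ => beval v φ && beval v ψ
  | .K G φ => v (.K G φ)
  | .Kh G φ => v (.Kh G φ)

/-- Instances of propositional tautologies. -/
def IsTaut {P n} (φ : Formula P n) : Prop := ∀ v, beval v φ = true

/-- The proof system SDKH. -/
inductive Provable {P : Type} {n : ℕ} : Formula P n → Prop
  | taut {φ} : IsTaut φ → Provable φ
  | distK {G : Grp n} {φ ψ} :
      Provable (((Formula.K G φ).and (Formula.K G (φ.imp ψ))).imp (Formula.K G ψ))
  | axT {G : Grp n} {φ} : Provable ((Formula.K G φ).imp φ)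
  | ax4 {G : Grp n} {φ} : Provable ((Formula.K G φ).imp (Formula.K G (Formula.K G φ)))
  | ax5 {G : Grp n} {φ} :
      Provable ((Formula.neg (Formula.K G φ)).imp (Formula.K G (Formula.neg (Formula.K G φ))))
  | axKMono {G H : Grp n} {φ} : G ⊆ H → Provable ((Formula.K G φ).imp (Formula.K H φ))
  | axKhMono {G H : Grp n} {φ} : G ⊆ H → Provable ((Formula.Kh G φ).imp (Formula.Kh H φ))
  | axKtoKh {G : Grp n} {φ} : Provable ((Formula.K G φ).imp (Formula.Kh G φ))
  | axEmpKhtoK {φ} : Provable ((Formula.Kh ∅ φ).imp (Formula.K ∅ φ))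
  | axKhtoKKh {G : Grp n} {φ} : Provable ((Formula.Kh G φ).imp (Formula.K G (Formula.Kh G φ)))
  | axEmpMono {G : Grp n} {φ ψ} :
      Provable ((Formula.K ∅ (φ.imp ψ)).imp (Formula.K ∅ ((Formula.Kh G φ).imp (Formula.Kh G ψ))))
  | axKhbot {G : Grp n} : Provable ((Formula.Kh G Formula.bot).imp Formula.bot)
  | axKhtoKhK {G : Grp n} {φ} : Provable ((Formula.Kh G φ).imp (Formula.Kh G (Formula.K G φ)))
  | axKhKh {G : Grp n} {φ} : Provable ((Formula.Kh G (Formula.Kh G φ)).imp (Formula.Kh G φ))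
  | mp {φ ψ} : Provable (φ.imp ψ) → Provable φ → Provable ψ
  | necK {G : Grp n} {φ} : Provable φ → Provable (Formula.K G φ)

/-- Conjunction of a finite list of formulas. -/
def conj {P n} (L : List (Formula P n)) : Formula P n := L.foldr Formula.and Formula.top

/-- SDKH-consistency of a set of formulas. -/
def Consistent {P n} (X : Set (Formula P n)) : Prop :=
  ¬ ∃ L : List (Formula P n), (∀ φ ∈ L, φ ∈ X) ∧ Provable ((conj L).imp Formula.bot)

/-- Maximal consistent sets. -/
def MCS {P n} (X : Set (Formula P n)) : Prop :=
  Consistent X ∧ ∀ φ ∉ X, ¬ Consistent (insert φ X)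

/-! ### The canonical model -/

/-- One step ⟨(φ,G),H⟩X of a mixed sequence. -/
structure CStep (P : Type) (n : ℕ) where
  fml : Formula P n
  G : Grp n
  H : Grp n
  X : Set (Formula P n)

instance {P n} : Inhabited (CStep P n) := ⟨⟨.top, ∅, ∅, ∅⟩⟩

/-- The conditions on a mixed sequence X_0⟨(φ_1,G_1),H_1⟩X_1⋯⟨(φ_n,G_n),H_n⟩X_n
(the previous MCS being `X`). -/
def goodFrom {P n} : Set (Formula P n) → List (CStep P n) → Prop
  | _, [] => True
  | X, c :: rest =>
      MCS c.X ∧ c.G ≠ ∅ ∧ (Formula.Kh c.G c.fml) ∈ X ∧ (Formula.K c.G c.fml) ∈ c.X ∧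
      (∀ ψ, (Formula.K c.H ψ) ∈ X → ψ ∈ c.X) ∧ goodFrom c.X rest

/-- The final MCS `ed(s)` of a mixed sequence. -/
def edOf {P n} (X0 : Set (Formula P n)) (l : List (CStep P n)) : Set (Formula P n) :=
  l.foldl (fun _ c => c.X) X0

/-- States of the canonical model: mixed sequences starting at X_0. -/
def CState {P : Type} {n : ℕ} (X0 : Set (Formula P n)) := {l : List (CStep P n) // goodFrom X0 l}

/-- Canonical epistemic relation ∼^c_i. -/
def csim {P n} (X0 : Set (Formula P n)) (i : Fin n) (s t : CState X0) : Prop :=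
  ∃ k : ℕ, k ≤ s.1.length ∧ k ≤ t.1.length ∧
    (∀ j < k, (s.1.getD j default).X = (t.1.getD j default).X ∧
              (s.1.getD j default).H = (t.1.getD j default).H) ∧
    (∀ j, k ≤ j → j < s.1.length → i ∈ (s.1.getD j default).H) ∧
    (∀ j, k ≤ j → j < t.1.length → i ∈ (t.1.getD j default).H)

/-- Canonical atomic actions: pairs (φ, G). -/
abbrev CAct (P : Type) (n : ℕ) := Formula P n × Grp n

/-- Canonical atomic action sets A^c_G = {(φ,G) : φ ∈ DKH} for G ≠ ∅, A^c_∅ = ∅. -/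
def cA {P : Type} {n : ℕ} (G : Grp n) : Set (CAct P n) := {a | a.2 = G ∧ G ≠ ∅}

/-- Canonical transition: s →_{(φ,G)} t iff t = s⟨(φ,G),G'⟩X for some G' and MCS X. -/
def ctr {P n} (X0 : Set (Formula P n)) (a : CAct P n) (s t : CState X0) : Prop :=
  ∃ (G' : Grp n) (Y : Set (Formula P n)), MCS Y ∧ t.1 = s.1 ++ [⟨a.1, a.2, G', Y⟩]

theorem csim_equiv {P n} (X0 : Set (Formula P n)) (i : Fin n) : Equivalence (csim X0 i) := by
  constructor
  · intro s
    exact ⟨s.1.length, le_rfl, le_rfl, fun j _ => ⟨rfl, rfl⟩,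
      fun j h1 h2 => absurd h2 (by omega), fun j h1 h2 => absurd h2 (by omega)⟩
  · rintro s t ⟨k, h1, h2, h3, h4, h5⟩
    exact ⟨k, h2, h1, fun j hj => ⟨(h3 j hj).1.symm, (h3 j hj).2.symm⟩, h5, h4⟩
  · rintro s t u ⟨k1, hk1s, hk1t, heq1, hs1, ht1⟩ ⟨k2, hk2t, hk2u, heq2, ht2, hu2⟩
    refine ⟨min k1 k2, le_trans (min_le_left _ _) hk1s, le_trans (min_le_right _ _) hk2u,
      ?_, ?_, ?_⟩
    · intro j hj
      have e1 := heq1 j (lt_of_lt_of_le hj (min_le_left _ _))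
      have e2 := heq2 j (lt_of_lt_of_le hj (min_le_right _ _))
      exact ⟨e1.1.trans e2.1, e1.2.trans e2.2⟩
    · intro j hj hjs
      by_cases h : k1 ≤ j
      · exact hs1 j h hjs
      · have hj2 : k2 ≤ j := by omega
        have hjt : j < t.1.length := by omega
        have := ht2 j hj2 hjt
        have e := (heq1 j (by omega)).2
        rw [e]; exact this
    · intro j hj hju
      by_cases h : k2 ≤ j
      · exact hu2 j h hju
      · have hj1 : k1 ≤ j := by omega
        have hjt : j < t.1.length := by omega
        have := ht1 j hj1 hjt
        have e := (heq2 j (by omega)).2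
        rw [← e]; exact this

theorem cA_empty {P : Type} {n : ℕ} : (cA (P := P) (n := n) ∅) = ∅ := by
  ext a; simp [cA]

theorem cA_disj {P : Type} {n : ℕ} (G H : Grp n) (h : G ⊂ H) :
    cA (P := P) (n := n) G ∩ cA H = ∅ := by
  ext a
  simp only [Set.mem_inter_iff, Set.mem_empty_iff_false, iff_false, cA, Set.mem_setOf_eq]
  rintro ⟨⟨rfl, -⟩, ⟨h2, -⟩⟩
  exact h.ne h2

/-- The canonical model M^c(X_0). -/
def canonicalModel {P : Type} {n : ℕ} (X0 : Set (Formula P n)) : KhModel P n where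
  State := CState X0
  Act := CAct P n
  sim := csim X0
  sim_equiv := csim_equiv X0
  A := cA
  A_empty := cA_empty
  A_disj := cA_disj
  tr := ctr X0
  V := fun p => {s : CState X0 | Formula.atom p ∈ edOf X0 s.1}


/-! Suppose `[s']_G` is an inner node with `¬Kh_G φ ∈ ed(s')`. In the canonical model an
executable action of `A*_G` is atomic (a canonical transition determines its label, which no two
disjoint blocks of a joint action can share), some `(ψ, G')` with `∅ ≠ G' ⊆ G`, and being executable
at `w` forces `Kh_{G'} ψ ∈ ed(w)`. If moreover `¬Kh_G φ ∈ ed(w)`, then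
`{K_{G'} ψ, ¬Kh_G φ} ∪ {χ | K_∅ χ ∈ ed(w)}` is consistent (AxKhtoKhK, AxKhMono, AxEmpMono and
AxKhKh would otherwise put `Kh_G φ` into `ed(w)`), so a Lindenbaum extension `Y` of it yields the
σ-successor `w⟨(ψ, G'), ∅⟩Y` of `w`, again containing `¬Kh_G φ`. Leaves contain `Kh_G φ`, so
from `s'` on this never stops; prefixed by the execution leading from `[s]_G` to `[s']_G`, it is
an infinite execution of σ. -/

section Propositional

variable {P : Type} {n : ℕ}

lemma beval_neg (v : Formula P n → Bool) (φ : Formula P n) :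
    beval v φ.neg = true ↔ ¬ beval v φ = true := by
  simp [beval]

lemma beval_and (v : Formula P n → Bool) (φ ψ : Formula P n) :
    beval v (φ.and ψ) = true ↔ beval v φ = true ∧ beval v ψ = true := by
  simp [beval]

lemma beval_imp (v : Formula P n → Bool) (φ ψ : Formula P n) :
    beval v (φ.imp ψ) = true ↔ (beval v φ = true → beval v ψ = true) := by
  rw [Formula.imp, beval_neg, beval_and, beval_neg]
  tauto

lemma beval_bot (v : Formula P n → Bool) : ¬ beval v (Formula.bot : Formula P n) = true := by
  simp [Formula.bot, beval]

lemma beval_conj (v : Formula P n → Bool) (L : List (Formula P n)) :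
    beval v (conj L) = true ↔ ∀ χ ∈ L, beval v χ = true := by
  induction L with
  | nil => simp [conj, beval]
  | cons χ L ih => simp [conj, beval, ← ih]

lemma Provable.of_taut_imp {φ ψ : Formula P n} (h : Provable φ)
    (hv : ∀ v, beval v φ = true → beval v ψ = true) : Provable ψ :=
  .mp (.taut fun v => (beval_imp v φ ψ).2 (hv v)) h

lemma Provable.of_taut_imp₂ {φ₁ φ₂ ψ : Formula P n} (h₁ : Provable φ₁) (h₂ : Provable φ₂)
    (hv : ∀ v, beval v φ₁ = true → beval v φ₂ = true → beval v ψ = true) : Provable ψ :=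
  .mp (h₁.of_taut_imp fun v h => (beval_imp v φ₂ ψ).2 (hv v h)) h₂

end Propositional

section Derivability

variable {P : Type} {n : ℕ} {X : Set (Formula P n)} {φ φ₁ φ₂ ψ : Formula P n}

def Derives (X : Set (Formula P n)) (φ : Formula P n) : Prop :=
  ∃ L : List (Formula P n), (∀ χ ∈ L, χ ∈ X) ∧ Provable ((conj L).imp φ)

lemma consistent_iff_not_derives_bot : Consistent X ↔ ¬ Derives X Formula.bot := Iff.rfl

lemma derives_bot_of_not_consistent (h : ¬ Consistent X) : Derives X Formula.bot := not_not.1 h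

namespace Derives

lemma of_provable (h : Provable φ) : Derives X φ :=
  ⟨[], by simp, h.of_taut_imp fun v hφ => (beval_imp v _ _).2 fun _ => hφ⟩

lemma of_mem (h : φ ∈ X) : Derives X φ :=
  ⟨[φ], by simpa, .taut fun v => by simp [beval_imp, beval_conj]⟩

lemma of_taut_imp (h : Derives X φ) (hv : ∀ v, beval v φ = true → beval v ψ = true) :
    Derives X ψ :=
  let ⟨L, hL, hp⟩ := h
  ⟨L, hL, hp.of_taut_imp fun v => by simp only [beval_imp]; exact fun h hL => hv v (h hL)⟩

lemma of_taut_imp₂ (h₁ : Derives X φ₁) (h₂ : Derives X φ₂)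
    (hv : ∀ v, beval v φ₁ = true → beval v φ₂ = true → beval v ψ = true) : Derives X ψ := by
  obtain ⟨L₁, hL₁, hp₁⟩ := h₁
  obtain ⟨L₂, hL₂, hp₂⟩ := h₂
  refine ⟨L₁ ++ L₂, by simpa [or_imp, forall_and] using ⟨hL₁, hL₂⟩,
    hp₁.of_taut_imp₂ hp₂ fun v => ?_⟩
  simp only [beval_imp, beval_conj, List.mem_append]
  exact fun h₁ h₂ hL => hv v (h₁ fun χ hχ => hL χ (.inl hχ)) (h₂ fun χ hχ => hL χ (.inr hχ))

theorem deduction (h : Derives (insert φ X) ψ) : Derives X (φ.imp ψ) := by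
  classical
  obtain ⟨L, hL, hp⟩ := h
  refine ⟨L.filter (· ∈ X), by simp, hp.of_taut_imp fun v => ?_⟩
  simp only [beval_imp, beval_conj, List.mem_filter, decide_eq_true_eq]
  refine fun hψ hX hφ => hψ fun χ hχ => ?_
  rcases hL χ hχ with rfl | hχX
  exacts [hφ, hX χ ⟨hχ, hχX⟩]

end Derives

lemma isOfFiniteCharacter_consistent :
    Order.IsOfFiniteCharacter {X : Set (Formula P n) | Consistent X} := by
  refine fun X => ⟨fun hX Y hYX _ ⟨L, hL, hp⟩ => hX ⟨L, fun χ hχ => hYX (hL χ hχ), hp⟩,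
    fun hfin ⟨L, hL, hp⟩ => ?_⟩
  exact hfin {χ | χ ∈ L} (fun χ hχ => hL χ hχ) L.finite_toSet ⟨L, fun _ hχ => hχ, hp⟩

theorem lindenbaum (hX : Consistent X) : ∃ Y, X ⊆ Y ∧ MCS Y := by
  obtain ⟨Y, hXY, hY⟩ := isOfFiniteCharacter_consistent.exists_maximal hX
  exact ⟨Y, hXY, hY.1, fun φ hφ hcons => hφ (hY.2 hcons (Set.subset_insert φ Y) (.inl rfl))⟩

namespace MCS

lemma neg_mem_of_not_mem (hX : MCS X) (h : φ ∉ X) : φ.neg ∈ X := by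
  by_contra hn
  exact hX.1 <| Derives.of_taut_imp₂ (derives_bot_of_not_consistent (hX.2 φ h)).deduction
    (derives_bot_of_not_consistent (hX.2 _ hn)).deduction fun v => by
      simp only [beval_imp, beval_neg]
      have := beval_bot v
      tauto

lemma neg_mem_iff (hX : MCS X) : φ.neg ∈ X ↔ φ ∉ X :=
  ⟨fun hn h => hX.1 <| (Derives.of_mem h).of_taut_imp₂ (.of_mem hn) fun v => by
      simp only [beval_neg]; exact fun h hn => absurd h hn,
    hX.neg_mem_of_not_mem⟩

lemma mem_of_derives (hX : MCS X) (h : Derives X φ) : φ ∈ X := by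
  by_contra hφ
  exact hX.1 <| h.of_taut_imp₂ (.of_mem (hX.neg_mem_of_not_mem hφ)) fun v => by
    simp only [beval_neg]; exact fun h hn => absurd h hn

lemma mem_of_provable (hX : MCS X) (h : Provable φ) : φ ∈ X :=
  hX.mem_of_derives (.of_provable h)

lemma mp (hX : MCS X) (hφψ : φ.imp ψ ∈ X) (hφ : φ ∈ X) : ψ ∈ X :=
  hX.mem_of_derives <| (Derives.of_mem hφψ).of_taut_imp₂ (.of_mem hφ) fun v => by
    simp only [beval_imp]; exact id

lemma mem_of_provable_imp (hX : MCS X) (h : Provable (φ.imp ψ)) (hφ : φ ∈ X) : ψ ∈ X :=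
  hX.mp (hX.mem_of_provable h) hφ

lemma K_mp (hX : MCS X) {H : Grp n} (hφψ : Formula.K H (φ.imp ψ) ∈ X)
    (hφ : Formula.K H φ ∈ X) : Formula.K H ψ ∈ X := by
  have hdist : Provable ((Formula.K H (φ.imp ψ)).imp ((Formula.K H φ).imp (Formula.K H ψ))) :=
    Provable.distK.of_taut_imp fun v => by simp only [beval_imp, beval_and]; tauto
  exact hX.mp (hX.mem_of_provable_imp hdist hφψ) hφ

lemma K_mem_of_derives (hX : MCS X) {H : Grp n} (h : Derives {χ | Formula.K H χ ∈ X} φ) :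
    Formula.K H φ ∈ X := by
  obtain ⟨L, hL, hp⟩ := h
  induction L generalizing φ with
  | nil =>
    exact hX.mem_of_provable <| .necK <| hp.of_taut_imp fun v => by
      simp only [beval_imp, beval_conj]; simp
  | cons χ L ih =>
    refine hX.K_mp (ih (fun ψ hψ => hL ψ (.tail _ hψ)) (hp.of_taut_imp fun v => ?_))
      (hL χ (.head _))
    simp only [beval_imp, beval_conj, List.mem_cons]
    exact fun h hL hχ => h fun ψ hψ => hψ.elim (· ▸ hχ) (hL ψ)

end MCS

end Derivability

section Executions

variable {P : Type} {n : ℕ} {M : KhModel P n} {G : Grp n} (σ : Strategy M G)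
  {s t w v : M.State}

lemma gsim_equivalence (M : KhModel P n) (G : Grp n) : Equivalence (gsim M G) where
  refl s i _ := (M.sim_equiv i).refl s
  symm h i hi := (M.sim_equiv i).symm (h i hi)
  trans h₁ h₂ i hi := (M.sim_equiv i).trans (h₁ i hi) (h₂ i hi)

lemma stepRel_of_gsim_left {w' : M.State} (hw : gsim M G w' w) (h : stepRel σ w v) :
    stepRel σ w' v :=
  let ⟨d, hd, u, u', hwu, hvu', htr⟩ := h
  ⟨d, (σ.uniform w' w hw).trans hd, u, u', (gsim_equivalence M G).trans hw hwu, hvu', htr⟩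

lemma stepRel_of_gsim_right {v' : M.State} (hv : gsim M G v' v) (h : stepRel σ w v) :
    stepRel σ w v' :=
  let ⟨d, hd, u, u', hwu, hvu', htr⟩ := h
  ⟨d, hd, u, u', hwu, (gsim_equivalence M G).trans hv hvu', htr⟩

def Reaches (s t : M.State) : Prop :=
  ∃ (m : ℕ) (f : ℕ → M.State), gsim M G s (f 0) ∧
    (∀ j < m, stepRel σ (f j) (f (j + 1))) ∧ gsim M G (f m) t

lemma Reaches.trans_stepRel (h : Reaches σ s w) (hwv : stepRel σ w v) : Reaches σ s v := by
  obtain ⟨m, f, h₀, hf, hm⟩ := h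
  refine ⟨m + 1, fun i => if i ≤ m then f i else v, by simpa using h₀, fun j hj => ?_,
    by simpa using (gsim_equivalence M G).refl v⟩
  rcases Nat.lt_succ_iff_lt_or_eq.1 hj with hj | rfl
  · simpa [hj.le, Nat.succ_le_of_lt hj] using hf j hj
  · simpa using stepRel_of_gsim_left σ hm hwv

lemma reaches_of_mem_CEInner (h : t ∈ CEInner σ s) : Reaches σ s t := by
  rcases h with ⟨m, f, h₀, hf, -, j, hj, ht⟩ | ⟨f, h₀, hf, j, ht⟩
  · exact ⟨j, f, h₀, fun i hi => hf i (hi.trans hj), ht⟩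
  · exact ⟨j, f, h₀, fun i _ => hf i, ht⟩

lemma mem_CELeaf_of_reaches (h : Reaches σ s t) (ht : σ.act t = none) : t ∈ CELeaf σ s :=
  let ⟨m, f, h₀, hf, hm⟩ := h
  ⟨m, f, h₀, hf, (σ.uniform _ _ hm).trans ht, hm⟩

lemma InfiniteFrom.of_gsim (hst : gsim M G s t) (h : InfiniteFrom σ t) : InfiniteFrom σ s :=
  let ⟨f, h₀, hf⟩ := h
  ⟨f, (gsim_equivalence M G).trans hst h₀, hf⟩

lemma InfiniteFrom.of_stepRel (hst : stepRel σ s t) (h : InfiniteFrom σ t) :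
    InfiniteFrom σ s := by
  obtain ⟨f, h₀, hf⟩ := h
  exact ⟨fun | 0 => s | j + 1 => f j, (gsim_equivalence M G).refl s,
    fun | 0 => stepRel_of_gsim_right σ ((gsim_equivalence M G).symm h₀) hst | j + 1 => hf j⟩

lemma Reaches.infiniteFrom (h : Reaches σ s t) (ht : InfiniteFrom σ t) : InfiniteFrom σ s := by
  obtain ⟨m, f, h₀, hf, hm⟩ := h
  induction m generalizing s f with
  | zero => exact ht.of_gsim σ ((gsim_equivalence M G).trans h₀ hm)
  | succ m ih =>
    have h₁ : InfiniteFrom σ (f 1) :=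
      ih (f := fun i => f (i + 1)) ((gsim_equivalence M G).refl _)
        (fun j hj => hf (j + 1) (by omega)) hm
    exact (h₁.of_stepRel σ (hf 0 m.succ_pos)).of_gsim σ h₀

lemma infiniteFrom_of_forall_exists_stepRel (S : Set M.State)
    (hS : ∀ w ∈ S, ∃ v ∈ S, stepRel σ w v) (hs : s ∈ S) : InfiniteFrom σ s := by
  choose! next hnextS hnext using hS
  have hiter : ∀ k, next^[k] s ∈ S := fun k => by
    induction k with
    | zero => exact hs
    | succ k ih => rw [Function.iterate_succ_apply']; exact hnextS _ ih
  refine ⟨fun k => next^[k] s, (gsim_equivalence M G).refl s, fun k => ?_⟩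
  simpa only [Function.iterate_succ_apply'] using hnext _ (hiter k)

theorem infiniteFrom_of_reaches_of_propagates (Q : M.State → Prop)
    (hQ : ∀ w, Q w → σ.act w ≠ none → ∃ v, stepRel σ w v ∧ Q v)
    (hleaf : ∀ t ∈ CELeaf σ s, ¬ Q t) (ht : Reaches σ s t) (hQt : Q t) : InfiniteFrom σ s := by
  refine ht.infiniteFrom σ <| infiniteFrom_of_forall_exists_stepRel σ {w | Reaches σ s w ∧ Q w}
    (fun w ⟨hw, hQw⟩ => ?_) ⟨ht, hQt⟩
  have hact : σ.act w ≠ none := fun hnone => hleaf w (mem_CELeaf_of_reaches σ hw hnone) hQw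
  obtain ⟨v, hwv, hQv⟩ := hQ w hQw hact
  exact ⟨v, ⟨hw.trans_stepRel σ hwv, hQv⟩, hwv⟩

end Executions

theorem star.exists_tr_of_dtr {n : ℕ} {Act State : Type} {A : Grp n → Set Act}
    {tr : Act → State → State → Prop} :
    ∀ {G : Grp n} {d : DAct Act}, star A G d → ∀ {w v : State}, dtr tr d w v →
      ∃ G' ⊆ G, ∃ a ∈ A G', tr a w v
  | _, _, .base hG' ha, _, _, h => ⟨_, hG', _, ha, h⟩
  | _, _, .joint _ hGs _ (.cons hB _), _, _, h =>
    let ⟨G', hG', a, ha, htr⟩ := star.exists_tr_of_dtr hB h.1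
    ⟨G', hG'.trans (hGs.2.2 _ List.mem_cons_self), a, ha, htr⟩
  | _, _, .joint hlen _ _ .nil, _, _, _ => absurd hlen (by simp)

section Canonical

variable {P : Type} {n : ℕ} {X0 : Set (Formula P n)}

lemma edOf_append_singleton (X : Set (Formula P n)) (l : List (CStep P n)) (c : CStep P n) :
    edOf X (l ++ [c]) = c.X := by
  simp [edOf, List.foldl_append]

lemma goodFrom_append_singleton {X : Set (Formula P n)} {l : List (CStep P n)} {c : CStep P n} :
    goodFrom X (l ++ [c]) ↔ goodFrom X l ∧ MCS c.X ∧ c.G ≠ ∅ ∧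
      Formula.Kh c.G c.fml ∈ edOf X l ∧ Formula.K c.G c.fml ∈ c.X ∧
      ∀ ψ, Formula.K c.H ψ ∈ edOf X l → ψ ∈ c.X := by
  induction l generalizing X with
  | nil => simp only [List.nil_append, goodFrom, edOf, List.foldl]; tauto
  | cons c' l ih => simp only [List.cons_append, goodFrom, ih]; tauto

lemma mcs_edOf {X : Set (Formula P n)} {l : List (CStep P n)} (hX : MCS X)
    (hl : goodFrom X l) : MCS (edOf X l) := by
  induction l generalizing X with
  | nil => exact hX
  | cons c l ih => exact ih hl.1 hl.2.2.2.2.2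

lemma Kh_mem_edOf_of_ctr {a : CAct P n} {w u : CState X0} (h : ctr X0 a w u) :
    Formula.Kh a.2 a.1 ∈ edOf X0 w.1 := by
  obtain ⟨H, Y, -, hu⟩ := h
  have hgood := u.2
  rw [hu] at hgood
  exact (goodFrom_append_singleton.1 hgood).2.2.2.1

lemma exists_ctr_edOf_eq (w : CState X0) {a : CAct P n} (ha : a.2 ≠ ∅)
    (hKh : Formula.Kh a.2 a.1 ∈ edOf X0 w.1) {H : Grp n} {Y : Set (Formula P n)} (hY : MCS Y)
    (hK : Formula.K a.2 a.1 ∈ Y) (hHY : ∀ ψ, Formula.K H ψ ∈ edOf X0 w.1 → ψ ∈ Y) :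
    ∃ v : CState X0, ctr X0 a w v ∧ edOf X0 v.1 = Y :=
  ⟨⟨w.1 ++ [⟨a.1, a.2, H, Y⟩], goodFrom_append_singleton.2 ⟨w.2, hY, ha, hKh, hK, hHY⟩⟩,
    ⟨H, Y, hY, rfl⟩, edOf_append_singleton _ _ _⟩

lemma ctr_action_eq {a b : CAct P n} {w v : CState X0} (ha : ctr X0 a w v) (hb : ctr X0 b w v) :
    a = b := by
  obtain ⟨_, _, _, hva⟩ := ha
  obtain ⟨_, _, _, hvb⟩ := hb
  have := List.append_cancel_left (hva.symm.trans hvb)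
  simp only [List.cons.injEq, CStep.mk.injEq, and_true] at this
  exact Prod.ext this.1 this.2.1

lemma eq_atom_of_star_of_dtr {G : Grp n} {d : DAct (CAct P n)} (hd : star cA G d)
    {w v : CState X0} (h : dtr (ctr X0) d w v) : ∃ a, d = .atom a ∧ a.2 ⊆ G ∧ a.2 ≠ ∅ := by
  cases hd with
  | base hG' ha => exact ⟨_, rfl, ha.1 ▸ hG', ha.1 ▸ ha.2⟩
  | joint hlen hGs _ hds =>
    exfalso
    rcases hds with _ | ⟨hd₁, _ | ⟨hd₂, -⟩⟩
    · simp at hlen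
    · simp at hlen
    obtain ⟨G₁, hG₁, a₁, ⟨rfl, ha₁⟩, h₁⟩ := hd₁.exists_tr_of_dtr h.1
    obtain ⟨G₂, hG₂, a₂, ⟨rfl, -⟩, h₂⟩ := hd₂.exists_tr_of_dtr h.2.1
    have hdisj := (List.pairwise_cons.1 hGs.2.1).1 _ List.mem_cons_self
    rw [ctr_action_eq h₁ h₂] at hG₁ ha₁
    exact ha₁ (disjoint_self.1 (hdisj.mono hG₁ hG₂))

end Canonical

section KeyStep

variable {P : Type} {n : ℕ}

lemma consistent_insert_K_insert_neg_Kh {W : Set (Formula P n)} (hW : MCS W) {G G' : Grp n}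
    {φ ψ : Formula P n} (hG' : G' ⊆ G) (hKh : Formula.Kh G' ψ ∈ W)
    (hneg : (Formula.Kh G φ).neg ∈ W) :
    Consistent (insert (Formula.K G' ψ) (insert (Formula.Kh G φ).neg
      {χ | Formula.K ∅ χ ∈ W})) := by
  rw [consistent_iff_not_derives_bot]
  intro hder
  have himp : Formula.K ∅ ((Formula.K G' ψ).imp (Formula.Kh G φ)) ∈ W :=
    hW.K_mem_of_derives <| hder.deduction.deduction.of_taut_imp fun v => by
      simp only [beval_imp, beval_neg]
      have := beval_bot v
      tauto
  have hmono : (Formula.Kh G (Formula.K G' ψ)).imp (Formula.Kh G (Formula.Kh G φ)) ∈ W :=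
    hW.mem_of_provable_imp .axT (hW.mem_of_provable_imp .axEmpMono himp)
  have hKhK : Formula.Kh G (Formula.K G' ψ) ∈ W :=
    hW.mem_of_provable_imp (.axKhMono hG') (hW.mem_of_provable_imp .axKhtoKhK hKh)
  exact hW.neg_mem_iff.1 hneg (hW.mem_of_provable_imp .axKhKh (hW.mp hmono hKhK))

theorem exists_stepRel_neg_Kh_mem {X0 : Set (Formula P n)} (hX0 : MCS X0) {G : Grp n}
    {φ : Formula P n} (σ : Strategy (canonicalModel X0) G) {w : CState X0}
    (hneg : (Formula.Kh G φ).neg ∈ edOf X0 w.1) (hact : σ.act w ≠ none) :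
    ∃ v : CState X0, stepRel σ w v ∧ (Formula.Kh G φ).neg ∈ edOf X0 v.1 := by
  have hrefl := (gsim_equivalence (canonicalModel X0) G).refl
  obtain ⟨d, hd⟩ := Option.ne_none_iff_exists'.1 hact
  obtain ⟨u, hu⟩ := σ.exec w d hd w (hrefl w)
  obtain ⟨a, rfl, haG, ha⟩ := eq_atom_of_star_of_dtr (σ.mem_star w _ hd) hu
  have hKh := Kh_mem_edOf_of_ctr hu
  obtain ⟨Y, hsub, hY⟩ :=
    lindenbaum (consistent_insert_K_insert_neg_Kh (mcs_edOf hX0 w.2) haG hKh hneg)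
  obtain ⟨v, hv, rfl⟩ := exists_ctr_edOf_eq w ha hKh hY (hsub (.inl rfl))
    (fun ψ hψ => hsub (.inr (.inr hψ)))
  exact ⟨v, ⟨.atom a, hd, w, v, hrefl w, hrefl v, hv⟩, hsub (.inr (.inl rfl))⟩

end KeyStep

/-- In the canonical model, for any strategy σ_G all of whose
complete executions from [s]_G are finite and with Kh_G φ ∈ ed(t) for every
leaf-node [t]_G ∈ CELeaf(σ_G,s): if some inner-node [s']_G ∈ CEInner(σ_G,s)
has ¬Kh_G φ ∈ ed(s'), then there is an infinite execution of σ_G from [s]_G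
(hence, by contradiction, Kh_G φ ∈ ed(s') for every inner-node). -/
theorem inner_nodes_kh {P : Type} [Countable P] {n : ℕ}
    (X0 : Set (Formula P n)) (hX0 : MCS X0)
    (G : Grp n) (φ : Formula P n) (s : CState X0)
    (σ : Strategy (canonicalModel X0) G)
    (hfin : ¬ InfiniteFrom σ s)
    (hleaf : ∀ t : CState X0, t ∈ CELeaf σ s → Formula.Kh G φ ∈ edOf X0 t.1) :
    ((∃ s' : CState X0, s' ∈ CEInner σ s ∧
        Formula.neg (Formula.Kh G φ) ∈ edOf X0 s'.1) → InfiniteFrom σ s) ∧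
    (∀ s' : CState X0, s' ∈ CEInner σ s → Formula.Kh G φ ∈ edOf X0 s'.1) := by
  have hinf : ∀ s' ∈ CEInner σ s, (Formula.Kh G φ).neg ∈ edOf X0 s'.1 → InfiniteFrom σ s :=
    fun s' hs' hneg => infiniteFrom_of_reaches_of_propagates σ
      (fun w : CState X0 => (Formula.Kh G φ).neg ∈ edOf X0 w.1)
      (fun _ hw hact => exists_stepRel_neg_Kh_mem hX0 σ hw hact)
      (fun t ht hneg => (mcs_edOf hX0 t.2).neg_mem_iff.1 hneg (hleaf t ht))
      (reaches_of_mem_CEInner σ hs') hneg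
  refine ⟨fun ⟨s', hs', hneg⟩ => hinf s' hs' hneg, fun s' hs' => ?_⟩
  by_contra hnot
  exact hfin (hinf s' hs' ((mcs_edOf hX0 s'.2).neg_mem_iff.2 hnot))

end DKH
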